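/- arXiv:1407.5044 — 2 statements merged into one kernel-verified Lean document; each statement's English description precedes it below -/
import Mathlib

section
/- Uniqueness for the discrete Howard problem: assume that for every policy α the matrix B(α) is monotone. If V, W ∈ ℝ^N both satisfy F(V) = 0 and F(W) = 0 (componentwise), then V = W. -/
open Matrix

/-- A square real matrix is monotone if it is invertible and every entry of its
inverse is nonnegative. -/
def IsMonotoneMatrix {N : ℕ} (M : Matrix (Fin N) (Fin N) ℝ) : Prop :=
  IsUnit M ∧ ∀ i j, 0 ≤ M⁻¹ i j

/-!
If `F(W) = B(ᾱ)W − c(ᾱ)` for a policy `ᾱ` attaining the minimum at `W`, then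
`F(V) ≤ B(ᾱ)V − c(ᾱ)`, so `F(W) ≤ F(V)` gives `B(ᾱ)(V − W) ≥ 0`, and monotonicity of
`B(ᾱ)` yields `W ≤ V`. Uniqueness follows by exchanging the roles of `V` and `W`.
-/

theorem IsMonotoneMatrix.nonneg_of_nonneg_mulVec {N : ℕ} {M : Matrix (Fin N) (Fin N) ℝ}
    (hM : IsMonotoneMatrix M) {x : Fin N → ℝ} (hx : 0 ≤ M *ᵥ x) : 0 ≤ x := by
  have hdet : IsUnit M.det := (isUnit_iff_isUnit_det M).mp hM.1
  have hx_eq : x = M⁻¹ *ᵥ (M *ᵥ x) := by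
    rw [mulVec_mulVec, nonsing_inv_mul M hdet, one_mulVec]
  rw [hx_eq]
  exact fun i => dotProduct_nonneg_of_nonneg (fun j => hM.2 i j) hx

section Howard

variable {N : ℕ} {A : Type*} (b : Fin N → A → (Fin N → ℝ)) (r : Fin N → A → ℝ)

def policyMatrix (α : Fin N → A) : Matrix (Fin N) (Fin N) ℝ :=
  Matrix.of fun i j => b i (α i) j

theorem policyMatrix_mulVec_apply (α : Fin N → A) (x : Fin N → ℝ) (i : Fin N) :
    (policyMatrix b α *ᵥ x) i = b i (α i) ⬝ᵥ x :=
  rfl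

variable [Fintype A] [Nonempty A]

noncomputable def howardOperator (V : Fin N → ℝ) (i : Fin N) : ℝ :=
  Finset.univ.inf' Finset.univ_nonempty fun a : A => b i a ⬝ᵥ V - r i a

theorem howardOperator_le (V : Fin N → ℝ) (i : Fin N) (a : A) :
    howardOperator b r V i ≤ b i a ⬝ᵥ V - r i a :=
  Finset.inf'_le _ (Finset.mem_univ a)

theorem exists_policy_howardOperator_eq (V : Fin N → ℝ) :
    ∃ α : Fin N → A, ∀ i, howardOperator b r V i = b i (α i) ⬝ᵥ V - r i (α i) := by
  choose α _ hα using fun i =>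
    Finset.exists_mem_eq_inf' Finset.univ_nonempty fun a : A => b i a ⬝ᵥ V - r i a
  exact ⟨α, hα⟩

theorem le_of_howardOperator_le (hmon : ∀ α, IsMonotoneMatrix (policyMatrix b α))
    {V W : Fin N → ℝ} (h : howardOperator b r W ≤ howardOperator b r V) : W ≤ V := by
  obtain ⟨α, hα⟩ := exists_policy_howardOperator_eq b r W
  have hpos : 0 ≤ policyMatrix b α *ᵥ (V - W) := fun i => by
    rw [Pi.zero_apply, policyMatrix_mulVec_apply, dotProduct_sub]
    linarith [h i, hα i, howardOperator_le b r V i (α i)]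
  exact sub_nonneg.mp ((hmon α).nonneg_of_nonneg_mulVec hpos)

end Howard

theorem stmt6_general {N : ℕ} {A : Type*} [Fintype A] [Nonempty A]
    (b : Fin N → A → (Fin N → ℝ)) (r : Fin N → A → ℝ)
    (F : (Fin N → ℝ) → (Fin N → ℝ))
    (hF : ∀ (V : Fin N → ℝ) (i : Fin N),
      F V i = Finset.univ.inf' Finset.univ_nonempty (fun a : A => b i a ⬝ᵥ V - r i a))
    (hmonM : ∀ α : Fin N → A, IsMonotoneMatrix (Matrix.of fun i j => b i (α i) j))
    (V W : Fin N → ℝ) (hV : ∀ i, F V i = 0) (hW : ∀ i, F W i = 0) :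
    V = W := by
  have hF_eq : F = howardOperator b r := funext fun V => funext (hF V)
  have hVW : howardOperator b r V = howardOperator b r W := by
    rw [← hF_eq]
    exact funext fun i => (hV i).trans (hW i).symm
  exact le_antisymm (le_of_howardOperator_le b r hmonM hVW.le)
    (le_of_howardOperator_le b r hmonM hVW.ge)

/-- Uniqueness for the discrete Howard problem: if `B(α)` is monotone for
every policy `α`, and `F(V) = 0 = F(W)` where `F(V)_i = min_{a∈A} (b_i(a)·V − r_i(a))`,
then `V = W`. -/
theorem stmt6 {N : ℕ} (hN : 1 ≤ N) {A : Type*} [Fintype A] [Nonempty A]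
    (b : Fin N → A → (Fin N → ℝ)) (r : Fin N → A → ℝ)
    (F : (Fin N → ℝ) → (Fin N → ℝ))
    (hF : ∀ (V : Fin N → ℝ) (i : Fin N),
      F V i = Finset.univ.inf' Finset.univ_nonempty (fun a : A => b i a ⬝ᵥ V - r i a))
    (hmonM : ∀ α : Fin N → A, IsMonotoneMatrix (Matrix.of fun i j => b i (α i) j))
    (V W : Fin N → ℝ) (hV : ∀ i, F V i = 0) (hW : ∀ i, F W i = 0) :
    V = W :=
  stmt6_general b r F hF hmonM V W hV hW
end

section
/- Monotone step of the parallel Howard iteration (upper bound): assume each r_i(a) : ℝ^N → ℝ is nondecreasing with respect to the componentwise order (hypothesis H4). Let V* ∈ ℝ^N satisfy min_{a∈A}(b_i(a)·V* − r_i(a)(V*)) = 0 for every component i. Let V₁ ≤ V* and let V₂ ∈ ℝ^N satisfy min_{a∈A}(b_i(a)·V₂ − r_i(a)(V₁)) = 0 for every component i, the minimum being attained simultaneously in all components by a policy β₂ with B(β₂) a monotone matrix. Then V₂ ≤ V* componentwise. -/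
open Matrix

theorem IsMonotoneMatrix.le_of_mulVec_le {N : ℕ} {M : Matrix (Fin N) (Fin N) ℝ}
    (hM : IsMonotoneMatrix M) {x y : Fin N → ℝ} (h : M *ᵥ x ≤ M *ᵥ y) : x ≤ y := by
  obtain ⟨hunit, hinv⟩ := hM
  have hdet : IsUnit M.det := (isUnit_iff_isUnit_det M).mp hunit
  have hyx : y - x = M⁻¹ *ᵥ (M *ᵥ y - M *ᵥ x) := by
    rw [← mulVec_sub, mulVec_mulVec, nonsing_inv_mul M hdet, one_mulVec]
  refine sub_nonneg.mp fun i => ?_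
  rw [hyx]
  exact dotProduct_nonneg_of_nonneg (fun j => hinv i j) (sub_nonneg.mpr h)

theorem stmt8_general {N : ℕ} {A : Type*} [Fintype A] [Nonempty A]
    (b : Fin N → A → (Fin N → ℝ)) (r : Fin N → A → (Fin N → ℝ) → ℝ)
    (hH4 : ∀ (i : Fin N) (a : A) (W₁ W₂ : Fin N → ℝ),
      (∀ j, W₁ j ≤ W₂ j) → r i a W₁ ≤ r i a W₂)
    (Vstar : Fin N → ℝ)
    (hVstar : ∀ i : Fin N,
      Finset.univ.inf' Finset.univ_nonempty (fun a : A => b i a ⬝ᵥ Vstar - r i a Vstar) = 0)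
    (V₁ : Fin N → ℝ) (hV₁ : ∀ i, V₁ i ≤ Vstar i)
    (V₂ : Fin N → ℝ)
    (β₂ : Fin N → A)
    (hβ₂ : ∀ i, b i (β₂ i) ⬝ᵥ V₂ - r i (β₂ i) V₁ = 0)
    (hβ₂mon : IsMonotoneMatrix (Matrix.of fun i j => b i (β₂ i) j)) :
    ∀ i, V₂ i ≤ Vstar i := by
  refine hβ₂mon.le_of_mulVec_le fun i => ?_
  have hVstar_le : 0 ≤ b i (β₂ i) ⬝ᵥ Vstar - r i (β₂ i) Vstar :=
    (hVstar i).symm.le.trans (Finset.inf'_le _ (Finset.mem_univ _))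
  -- Row `i` of `B(β₂) *ᵥ V` is `b i (β₂ i) ⬝ᵥ V` by definition of `mulVec`.
  calc b i (β₂ i) ⬝ᵥ V₂ = r i (β₂ i) V₁ := sub_eq_zero.mp (hβ₂ i)
    _ ≤ r i (β₂ i) Vstar := hH4 i (β₂ i) V₁ Vstar hV₁
    _ ≤ b i (β₂ i) ⬝ᵥ Vstar := sub_nonneg.mp hVstar_le

/-- Monotone step of the parallel Howard iteration (upper bound): under
hypothesis H4 (each `r_i(a)` nondecreasing), if `V*` solves the coupled fixed-point
problem, `V₁ ≤ V*`, and `V₂` solves `min_{a∈A} (b_i(a)·V₂ − r_i(a)(V₁)) = 0` for all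
`i`, the minimum being attained simultaneously in all components by a policy `β₂`
with `B(β₂)` monotone, then `V₂ ≤ V*` componentwise. -/
theorem stmt8 {N : ℕ} (hN : 1 ≤ N) {A : Type*} [Fintype A] [Nonempty A]
    (b : Fin N → A → (Fin N → ℝ)) (r : Fin N → A → (Fin N → ℝ) → ℝ)
    (hH4 : ∀ (i : Fin N) (a : A) (W₁ W₂ : Fin N → ℝ),
      (∀ j, W₁ j ≤ W₂ j) → r i a W₁ ≤ r i a W₂)
    (Vstar : Fin N → ℝ)
    (hVstar : ∀ i : Fin N,
      Finset.univ.inf' Finset.univ_nonempty (fun a : A => b i a ⬝ᵥ Vstar - r i a Vstar) = 0)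
    (V₁ : Fin N → ℝ) (hV₁ : ∀ i, V₁ i ≤ Vstar i)
    (V₂ : Fin N → ℝ)
    (hV₂ : ∀ i : Fin N,
      Finset.univ.inf' Finset.univ_nonempty (fun a : A => b i a ⬝ᵥ V₂ - r i a V₁) = 0)
    (β₂ : Fin N → A)
    (hβ₂ : ∀ i, b i (β₂ i) ⬝ᵥ V₂ - r i (β₂ i) V₁ = 0)
    (hβ₂mon : IsMonotoneMatrix (Matrix.of fun i j => b i (β₂ i) j)) :
    ∀ i, V₂ i ≤ Vstar i :=
  stmt8_general b r hH4 Vstar hVstar V₁ hV₁ V₂ β₂ hβ₂ hβ₂mon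
end
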